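/- arXiv:2504.04208 — 2 statements merged into one kernel-verified Lean document; each statement's English description precedes it below -/
import Mathlib

section
/- Let F₁, F₂ ∈ ℝ[x, y] be nonzero polynomials in two variables of degrees d₁ and d₂ respectively. If F₁ and F₂ have no common nonconstant factor (i.e., they are coprime in ℝ[x, y]), then the set of common zeros {(x, y) ∈ ℝ² : F₁(x, y) = 0 and F₂(x, y) = 0} has at most d₁·d₂ points. -/
/-
Write `P m` for the space of polynomials of total degree at most `m` and `dᵢ` for the degree
of `Fᵢ`. The subspace `F₁ • P (k + d₂) + F₂ • P (k + d₁)` of `P (k + d₁ + d₂)` vanishes on the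
common zeros, and coprimality forces its two summands to meet inside `F₁ F₂ • P k`, so its
dimension is at least `dim P (k + d₂) + dim P (k + d₁) - dim P k`. Lagrange interpolation makes
evaluation at a set `T` of at most `k + 1` points surjective on `P (k + d₁ + d₂)`, so that
subspace has codimension at least `#T`. In two variables `dim P m = (m + 2).choose 2`, whose
second difference is `d₁ d₂`; hence `#T ≤ d₁ d₂`.
-/

open MvPolynomial Module Finset

theorem Set.finite_of_forall_finset_card_le {α : Type*} {s : Set α} {n : ℕ}
    (h : ∀ t : Finset α, ↑t ⊆ s → #t ≤ n) : s.Finite := by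
  by_contra hs
  obtain ⟨t, hts, htn⟩ := Set.Infinite.exists_subset_card_eq hs (n + 1)
  have := h t hts
  omega

theorem Set.ncard_le_of_forall_finset_card_le {α : Type*} {s : Set α} {n : ℕ}
    (h : ∀ t : Finset α, ↑t ⊆ s → #t ≤ n) : s.ncard ≤ n := by
  have hs := Set.finite_of_forall_finset_card_le h
  rw [Set.ncard_eq_toFinset_card s hs]
  exact h _ (by simp)

namespace MvPolynomial

theorem finrank_restrictTotalDegree (σ R : Type*) [Fintype σ] [CommRing R] [Nontrivial R]
    (m : ℕ) :
    finrank R (restrictTotalDegree σ R m) = (m + Fintype.card σ).choose (Fintype.card σ) := by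
  classical
  have hmon : {n : σ →₀ ℕ | (n.sum fun _ e => e) ≤ m} =
      ↑((range (m + 1)).biUnion fun i => (univ : Finset σ).finsuppAntidiag i) := by
    ext n
    simp [Finsupp.sum_fintype]
  rw [restrictTotalDegree, finrank_eq_nat_card_basis (basisRestrictSupport R _), hmon,
    Nat.card_coe_set_eq, Set.ncard_coe_finset, card_biUnion, ← Nat.sum_range_multichoose]
  · simp [card_finsuppAntidiag_nat_eq_multichoose]
  · intro i _ j _ hij
    simp only [Function.onFun, disjoint_left, mem_finsuppAntidiag]
    grind

variable {σ K : Type*} [Field K]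

theorem exists_totalDegree_lt_card_eval_eq_one (T : Finset (σ → K)) {x : σ → K}
    (hx : x ∈ T) :
    ∃ g : MvPolynomial σ K, g.totalDegree < #T ∧ eval x g = 1 ∧
      ∀ y ∈ T, y ≠ x → eval y g = 0 := by
  classical
  choose i hi using fun y : T.erase x => Function.ne_iff.mp (ne_of_mem_erase y.2)
  refine ⟨∏ y, C (x (i y) - y.1 (i y))⁻¹ * (X (i y) - C (y.1 (i y))), ?_, ?_,
    fun y hy hyx => ?_⟩
  · calc _ ≤ ∑ y, (C (x (i y) - y.1 (i y))⁻¹ * (X (i y) - C (y.1 (i y)))).totalDegree :=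
          totalDegree_finsetProd _ _
      _ ≤ ∑ _ : T.erase x, 1 := by
          gcongr
          refine (totalDegree_mul _ _).trans ?_
          simp only [totalDegree_C, zero_add]
          exact (totalDegree_sub _ _).trans (by simp)
      _ < #T := by simpa using card_erase_lt_of_mem hx
  · simp only [map_prod, map_mul, map_sub, eval_C, eval_X]
    exact prod_eq_one fun y _ => inv_mul_cancel₀ (sub_ne_zero.mpr (hi y).symm)
  · simp only [map_prod]
    exact prod_eq_zero (mem_univ ⟨y, mem_erase.mpr ⟨hyx, hy⟩⟩) (by simp)

theorem exists_mem_restrictTotalDegree_eval_eq (T : Finset (σ → K)) {m : ℕ} (hT : #T ≤ m + 1)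
    (v : (σ → K) → K) :
    ∃ g ∈ restrictTotalDegree σ K m, ∀ y ∈ T, eval y g = v y := by
  choose! g hg_deg hg_one hg_zero using fun x (hx : x ∈ T) =>
    exists_totalDegree_lt_card_eval_eq_one T hx
  refine ⟨∑ x ∈ T, v x • g x, sum_mem fun x hx => Submodule.smul_mem _ _ ?_, fun y hy => ?_⟩
  · exact (mem_restrictTotalDegree _ _ _).mpr (by have := hg_deg x hx; omega)
  · rw [map_sum, sum_eq_single_of_mem y hy fun x hx hxy => by simp [hg_zero x hx y hy hxy.symm]]
    simp [hg_one y hy]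

theorem finrank_add_card_le_of_forall_eval_eq_zero [Finite σ] {T : Finset (σ → K)} {m : ℕ}
    (hT : #T ≤ m + 1) {W : Submodule K (MvPolynomial σ K)} (hWm : W ≤ restrictTotalDegree σ K m)
    (hWT : ∀ f ∈ W, ∀ x ∈ T, eval x f = 0) :
    finrank K W + #T ≤ finrank K (restrictTotalDegree σ K m) := by
  let ev : restrictTotalDegree σ K m →ₗ[K] T → K :=
    (LinearMap.pi fun x : T => (aeval (x : σ → K)).toLinearMap) ∘ₗ
      (restrictTotalDegree σ K m).subtype
  have hsurj : Function.Surjective ev := fun v => by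
    classical
    obtain ⟨g, hg, hgv⟩ := exists_mem_restrictTotalDegree_eval_eq T hT
      fun y => if h : y ∈ T then v ⟨y, h⟩ else 0
    refine ⟨⟨g, hg⟩, ?_⟩
    ext x
    simp [ev, hgv x.1 x.2]
  have hker : W.comap (restrictTotalDegree σ K m).subtype ≤ LinearMap.ker ev := fun f hf => by
    ext x
    simp [ev, hWT f hf x x.2]
  calc finrank K W + #T
      = finrank K (W.comap (restrictTotalDegree σ K m).subtype) +
          finrank K (LinearMap.range ev) := by
        rw [LinearMap.range_eq_top.mpr hsurj, finrank_top, finrank_fintype_fun_eq_card,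
          Fintype.card_coe, (Submodule.comapSubtypeEquivOfLe hWm).finrank_eq]
    _ ≤ finrank K (LinearMap.ker ev) + finrank K (LinearMap.range ev) := by
        gcongr; exact Submodule.finrank_mono hker
    _ = _ := by rw [add_comm, LinearMap.finrank_range_add_finrank_ker]

theorem map_mulLeft_inf_map_mulLeft_le {F₁ F₂ : MvPolynomial σ K} (hF₂ : F₂ ≠ 0)
    (hcop : IsRelPrime F₁ F₂) (k n : ℕ) :
    (restrictTotalDegree σ K (k + F₂.totalDegree)).map (LinearMap.mulLeft K F₁) ⊓
        (restrictTotalDegree σ K n).map (LinearMap.mulLeft K F₂) ≤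
      (restrictTotalDegree σ K k).map (LinearMap.mulLeft K (F₁ * F₂)) := by
  rintro _ ⟨⟨a, ha, rfl⟩, ⟨b, -, hba⟩⟩
  simp only [LinearMap.mulLeft_apply] at hba ⊢
  obtain ⟨c, rfl⟩ : F₂ ∣ a := hcop.symm.dvd_of_dvd_mul_left ⟨b, hba.symm⟩
  refine ⟨c, ?_, by simp⟩
  rcases eq_or_ne c 0 with rfl | hc
  · exact zero_mem _
  rw [SetLike.mem_coe, mem_restrictTotalDegree, totalDegree_mul_of_isDomain hF₂ hc] at ha
  rw [SetLike.mem_coe, mem_restrictTotalDegree]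
  omega

theorem finrank_map_mulLeft {F : MvPolynomial σ K} (hF : F ≠ 0)
    (p : Submodule K (MvPolynomial σ K)) :
    finrank K (p.map (LinearMap.mulLeft K F)) = finrank K p :=
  (Submodule.equivMapOfInjective _ (mul_right_injective₀ hF) p).finrank_eq.symm

theorem finrank_add_finrank_add_card_le [Finite σ] {F₁ F₂ : MvPolynomial σ K} (hF₁ : F₁ ≠ 0)
    (hF₂ : F₂ ≠ 0) (hcop : IsRelPrime F₁ F₂) {T : Finset (σ → K)}
    (hT : ∀ x ∈ T, eval x F₁ = 0 ∧ eval x F₂ = 0) {k : ℕ} (hk : #T ≤ k + 1) :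
    finrank K (restrictTotalDegree σ K (k + F₂.totalDegree)) +
        finrank K (restrictTotalDegree σ K (k + F₁.totalDegree)) + #T ≤
      finrank K (restrictTotalDegree σ K (k + F₁.totalDegree + F₂.totalDegree)) +
        finrank K (restrictTotalDegree σ K k) := by
  set d₁ := F₁.totalDegree
  set d₂ := F₂.totalDegree
  let A := (restrictTotalDegree σ K (k + d₂)).map (LinearMap.mulLeft K F₁)
  let B := (restrictTotalDegree σ K (k + d₁)).map (LinearMap.mulLeft K F₂)
  have hAB : A ⊔ B ≤ restrictTotalDegree σ K (k + d₁ + d₂) := by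
    refine sup_le ?_ ?_ <;> rintro _ ⟨a, ha, rfl⟩ <;>
      rw [SetLike.mem_coe, mem_restrictTotalDegree] at ha <;>
      rw [mem_restrictTotalDegree, LinearMap.mulLeft_apply] <;>
      refine (totalDegree_mul _ _).trans ?_ <;> omega
  have hABT : ∀ f ∈ A ⊔ B, ∀ x ∈ T, eval x f = 0 := by
    intro f hf x hx
    obtain ⟨_, ⟨a, -, rfl⟩, _, ⟨b, -, rfl⟩, rfl⟩ := Submodule.mem_sup.mp hf
    simp [(hT x hx).1, (hT x hx).2]
  have hsup := finrank_add_card_le_of_forall_eval_eq_zero (by omega) hAB hABT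
  have hinf : finrank K ↥(A ⊓ B) ≤ finrank K (restrictTotalDegree σ K k) :=
    (Submodule.finrank_mono (map_mulLeft_inf_map_mulLeft_le hF₂ hcop k (k + d₁))).trans_eq
      (finrank_map_mulLeft (mul_ne_zero hF₁ hF₂) _)
  have hdim := Submodule.finrank_sup_add_finrank_inf_eq A B
  rw [finrank_map_mulLeft hF₁, finrank_map_mulLeft hF₂] at hdim
  omega

theorem card_le_totalDegree_mul_totalDegree {F₁ F₂ : MvPolynomial (Fin 2) K} (hF₁ : F₁ ≠ 0)
    (hF₂ : F₂ ≠ 0) (hcop : IsRelPrime F₁ F₂) {T : Finset (Fin 2 → K)}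
    (hT : ∀ x ∈ T, eval x F₁ = 0 ∧ eval x F₂ = 0) :
    #T ≤ F₁.totalDegree * F₂.totalDegree := by
  have key := finrank_add_finrank_add_card_le hF₁ hF₂ hcop hT (k := #T) (Nat.le_succ _)
  simp only [finrank_restrictTotalDegree, Fintype.card_fin] at key
  have second_difference : ∀ k a b : ℕ, (k + a + b + 2).choose 2 + (k + 2).choose 2 =
      (k + b + 2).choose 2 + (k + a + 2).choose 2 + a * b := by
    intro k a b
    apply Nat.cast_injective (R := ℚ)
    push_cast [Nat.cast_choose_two]
    ring
  rw [second_difference] at key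
  omega

end MvPolynomial

/-- Bézout's theorem for plane curves: if `F₁, F₂ ∈ ℝ[x,y]` are nonzero
polynomials of degrees `d₁, d₂` with no common nonconstant factor, then
they have at most `d₁·d₂` common zeros in `ℝ²`. -/
theorem bezout_plane (F₁ F₂ : MvPolynomial (Fin 2) ℝ) (d₁ d₂ : ℕ)
    (hF₁ : F₁ ≠ 0) (hF₂ : F₂ ≠ 0)
    (hd₁ : F₁.totalDegree = d₁) (hd₂ : F₂.totalDegree = d₂)
    (hcop : ∀ g : MvPolynomial (Fin 2) ℝ, g ∣ F₁ → g ∣ F₂ → IsUnit g) :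
    ({x : Fin 2 → ℝ | MvPolynomial.eval x F₁ = 0 ∧
        MvPolynomial.eval x F₂ = 0}).Finite ∧
    ({x : Fin 2 → ℝ | MvPolynomial.eval x F₁ = 0 ∧
        MvPolynomial.eval x F₂ = 0}).ncard ≤ d₁ * d₂ := by
  subst hd₁ hd₂
  have hcard : ∀ T : Finset (Fin 2 → ℝ),
      ↑T ⊆ {x : Fin 2 → ℝ | MvPolynomial.eval x F₁ = 0 ∧ MvPolynomial.eval x F₂ = 0} →
        #T ≤ F₁.totalDegree * F₂.totalDegree := fun T hT =>
    MvPolynomial.card_le_totalDegree_mul_totalDegree hF₁ hF₂ hcop fun x hx => hT hx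
  exact ⟨Set.finite_of_forall_finset_card_le hcard, Set.ncard_le_of_forall_finset_card_le hcard⟩
end

section
/- For all constants c, c' > 0 there exist constants δ > 0 and K > 0 such that the following holds: if G is an abelian group, A ⊆ G is a finite nonempty set, and H ⊆ A × A satisfies |H| ≥ c·|A|² and |A −_H A| ≤ c'·|A|, then there exists a subset A' ⊆ A with |A'| ≥ δ·|A| and |A' − A'| ≤ K·|A'|. -/
/-!
Regard `H` as a bipartite graph of density at least `c` between two copies of `A`. Averaging
over a right vertex `b` (dependent random choice, via Cauchy–Schwarz) gives a set `U` of left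
neighbours of `b`, all of degree at least `c|A|/2`, in which few pairs have fewer than
`τ = c³|A|/256` common neighbours. Discarding the vertices of `U` in many such sparse pairs leaves
`A'` with `|A'| ≥ c|A|/8`, and the right vertices with many neighbours in `A'` form a set `B` with
`|B| ≥ c|A|/4`. Any `x ∈ A'` and `y ∈ B` are then joined by at least `c⁵|A|²/2¹⁴` paths
`x – w – z – y`, each of which writes `x - y = (x - w) - (z - w) + (z - y)` with all three terms in
`A −_H A`. Hence `|A' - B| ≤ 2¹⁴c'³|A|/c⁵`, and Ruzsa's triangle inequality
`|A' - A'| |B| ≤ |A' - B|²` bounds `|A' - A'|`.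
-/

open scoped Classical Pointwise
open Finset

namespace Finset

variable {α β : Type*}

lemma sum_le_sum_filter_le_add_card_mul (s : Finset α) (f : α → ℝ) {θ : ℝ} (hθ : 0 ≤ θ) :
    ∑ a ∈ s, f a ≤ ∑ a ∈ s with θ ≤ f a, f a + #s * θ := by
  rw [← sum_filter_add_sum_filter_not s (θ ≤ f ·)]
  gcongr
  calc ∑ a ∈ s with ¬θ ≤ f a, f a ≤ #{a ∈ s | ¬θ ≤ f a} * θ := by
        simpa using sum_le_card_nsmul {a ∈ s | ¬θ ≤ f a} f θ fun a ha => by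
          simp only [mem_filter, not_le] at ha; exact ha.2.le
    _ ≤ #s * θ := by gcongr; exact filter_subset _ _

lemma card_div_two_le_card_filter_le (s : Finset α) {f : α → ℝ} {θ : ℝ} (hθ : 0 < θ)
    (hf : ∀ a ∈ s, 0 ≤ f a) (hsum : ∑ a ∈ s, f a ≤ θ * #s / 2) :
    (#s : ℝ) / 2 ≤ #{a ∈ s | f a ≤ θ} := by
  have hmarkov : #{a ∈ s | ¬f a ≤ θ} * θ ≤ ∑ a ∈ s, f a := calc
    _ ≤ ∑ a ∈ s with ¬f a ≤ θ, f a := by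
        simpa using card_nsmul_le_sum _ _ θ fun a ha => by
          simp only [mem_filter] at ha; exact ha.2.le
    _ ≤ _ := sum_le_sum_of_subset_of_nonneg (filter_subset _ _) fun a ha _ => hf a ha
  have hsplit : (#{a ∈ s | f a ≤ θ} : ℝ) + #{a ∈ s | ¬f a ≤ θ} = #s := by
    exact_mod_cast card_filter_add_card_filter_not _
  nlinarith

variable (r : α → β → Prop) [∀ a b, Decidable (r a b)]

lemma card_filter_product_eq_sum_card_bipartiteAbove (s : Finset α) (t : Finset β) :
    #{p ∈ s ×ˢ t | r p.1 p.2} = ∑ a ∈ s, #(t.bipartiteAbove r a) := by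
  simp only [card_filter, sum_product, bipartiteAbove]

def codegree (t : Finset β) (a a' : α) : ℕ :=
  #{b ∈ t | r a b ∧ r a' b}

lemma le_card_filter_le_card_bipartiteBelow {s : Finset α} {t : Finset β} {δ : ℝ}
    (hs : s.Nonempty) (hδ : 0 ≤ δ)
    (hdeg : ∀ a ∈ s, δ * #t ≤ #(t.bipartiteAbove r a)) :
    δ * #t / 2 ≤ #{b ∈ t | δ * #s / 2 ≤ #(s.bipartiteBelow r b)} := by
  have hedges : #s * (δ * #t) ≤ ∑ b ∈ t, (#(s.bipartiteBelow r b) : ℝ) := calc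
    _ ≤ ∑ a ∈ s, (#(t.bipartiteAbove r a) : ℝ) := by simpa using card_nsmul_le_sum s _ _ hdeg
    _ = _ := by exact_mod_cast sum_card_bipartiteAbove_eq_sum_card_bipartiteBelow r
  have hsplit := sum_le_sum_filter_le_add_card_mul t (fun b => (#(s.bipartiteBelow r b) : ℝ))
    (θ := δ * #s / 2) (by positivity)
  have hpopular :
      ∑ b ∈ t with δ * #s / 2 ≤ #(s.bipartiteBelow r b), (#(s.bipartiteBelow r b) : ℝ)
        ≤ #{b ∈ t | δ * #s / 2 ≤ #(s.bipartiteBelow r b)} * #s := by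
    simpa using sum_le_card_nsmul _ _ (#s : ℝ) fun b _ => by
      exact_mod_cast card_le_card (filter_subset _ _)
  have hs' : (0 : ℝ) < #s := by exact_mod_cast hs.card_pos
  refine le_of_mul_le_mul_right ?_ hs'
  linarith

lemma mul_card_filter_le_card_paths (s : Finset α) (t : Finset β) (x : α) (y : β) (τ : ℝ) :
    τ * #{z ∈ s | r z y ∧ τ ≤ codegree r t x z}
      ≤ #{p ∈ s ×ˢ t | r x p.2 ∧ r p.1 p.2 ∧ r p.1 y} := by
  rw [card_filter_product_eq_sum_card_bipartiteAbove (fun z w => r x w ∧ r z w ∧ r z y)]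
  push_cast
  calc τ * #{z ∈ s | r z y ∧ τ ≤ codegree r t x z}
      ≤ ∑ z ∈ s with r z y ∧ τ ≤ codegree r t x z, (codegree r t x z : ℝ) := by
        rw [mul_comm]
        simpa using card_nsmul_le_sum _ _ τ fun z hz => (mem_filter.1 hz).2.2
    _ = ∑ z ∈ s with r z y ∧ τ ≤ codegree r t x z,
          (#(t.bipartiteAbove (fun z w => r x w ∧ r z w ∧ r z y) z) : ℝ) := by
        refine sum_congr rfl fun z hz => ?_
        have hzy := (mem_filter.1 hz).2.1
        simp only [codegree, bipartiteAbove, hzy, and_true]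
    _ ≤ _ := sum_le_sum_of_subset_of_nonneg (filter_subset _ _) fun _ _ _ => by positivity

lemma sum_card_sparse_pairs_le (S : Finset α) (t : Finset β) {τ : ℝ} (hτ : 0 ≤ τ) :
    ∑ b ∈ t, (#{p ∈ S.bipartiteBelow r b ×ˢ S.bipartiteBelow r b |
        (codegree r t p.1 p.2 : ℝ) < τ} : ℝ) ≤ τ * #S ^ 2 := by
  set P := {p ∈ S ×ˢ S | (codegree r t p.1 p.2 : ℝ) < τ}
  let R : α × α → β → Prop := fun p b => r p.1 b ∧ r p.2 b
  have hbelow : ∀ b, {p ∈ S.bipartiteBelow r b ×ˢ S.bipartiteBelow r b |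
      (codegree r t p.1 p.2 : ℝ) < τ} = P.bipartiteBelow R b := by
    intro b; ext p
    simp only [P, R, mem_bipartiteBelow, mem_filter, mem_product]
    tauto
  calc _ = ∑ p ∈ P, (codegree r t p.1 p.2 : ℝ) := by
        simp only [hbelow]
        exact_mod_cast (sum_card_bipartiteAbove_eq_sum_card_bipartiteBelow R).symm
    _ ≤ #P * τ := by simpa using sum_le_card_nsmul P _ τ fun p hp => (mem_filter.1 hp).2.le
    _ ≤ τ * #S ^ 2 := by
        rw [mul_comm, sq, ← Nat.cast_mul, ← card_product]
        gcongr
        exact filter_subset _ _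

lemma exists_sq_card_sub_mul_card_sparse_pairs (S : Finset α) {t : Finset β} (ht : t.Nonempty)
    {τ w : ℝ} (hτ : 0 ≤ τ) (hw : 0 ≤ w) :
    ∃ b ∈ t, (∑ a ∈ S, (#(t.bipartiteAbove r a) : ℝ)) ^ 2 / #t ^ 2 - w * τ * #S ^ 2 / #t ≤
      #(S.bipartiteBelow r b) ^ 2 - w * #{p ∈ S.bipartiteBelow r b ×ˢ S.bipartiteBelow r b |
        (codegree r t p.1 p.2 : ℝ) < τ} := by
  have hn : (0 : ℝ) < #t := by exact_mod_cast ht.card_pos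
  have hcs : (∑ a ∈ S, (#(t.bipartiteAbove r a) : ℝ)) ^ 2 / #t
      ≤ ∑ b ∈ t, (#(S.bipartiteBelow r b) : ℝ) ^ 2 := by
    have hdc : ∑ a ∈ S, (#(t.bipartiteAbove r a) : ℝ) =
        ∑ b ∈ t, (#(S.bipartiteBelow r b) : ℝ) := by
      exact_mod_cast sum_card_bipartiteAbove_eq_sum_card_bipartiteBelow r
    rw [div_le_iff₀' hn, hdc]
    exact sq_sum_le_card_mul_sum_sq
  have hsparse := mul_le_mul_of_nonneg_left (sum_card_sparse_pairs_le r S t hτ) hw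
  refine exists_le_of_sum_le ht ?_
  rw [sum_const, nsmul_eq_mul, sum_sub_distrib, ← mul_sum]
  have hmean : (#t : ℝ) * ((∑ a ∈ S, (#(t.bipartiteAbove r a) : ℝ)) ^ 2 / #t ^ 2 -
      w * τ * #S ^ 2 / #t) =
        (∑ a ∈ S, (#(t.bipartiteAbove r a) : ℝ)) ^ 2 / #t - w * τ * #S ^ 2 := by
    field_simp
  linarith

lemma exists_large_subset_few_sparse_pairs {S : Finset α} {t : Finset β} (ht : t.Nonempty)
    {c m : ℝ} (hc : 0 < c) (hSm : #S ≤ m)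
    (hS : c * m * #t / 2 ≤ ∑ a ∈ S, (#(t.bipartiteAbove r a) : ℝ)) :
    ∃ U ⊆ S, c * m / 4 ≤ #U ∧
      32 * #{p ∈ U ×ˢ U | (codegree r t p.1 p.2 : ℝ) < c ^ 3 * #t / 256} ≤ c * #U ^ 2 := by
  have hn : (0 : ℝ) < #t := by exact_mod_cast ht.card_pos
  have hm : 0 ≤ m := (Nat.cast_nonneg _).trans hSm
  obtain ⟨b, -, hb⟩ := exists_sq_card_sub_mul_card_sparse_pairs r S ht
    (τ := c ^ 3 * #t / 256) (w := 32 / c) (by positivity) (by positivity)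
  set U := S.bipartiteBelow r b
  set bad := #{p ∈ U ×ˢ U | (codegree r t p.1 p.2 : ℝ) < c ^ 3 * #t / 256}
  have hmain : c ^ 2 * m ^ 2 / 4 ≤ (∑ a ∈ S, (#(t.bipartiteAbove r a) : ℝ)) ^ 2 / #t ^ 2 := by
    calc c ^ 2 * m ^ 2 / 4 = (c * m * #t / 2) ^ 2 / #t ^ 2 := by field_simp; ring
      _ ≤ _ := by gcongr
  have herror : 32 / c * (c ^ 3 * #t / 256) * #S ^ 2 / #t ≤ c ^ 2 * m ^ 2 / 8 := by
    calc 32 / c * (c ^ 3 * #t / 256) * #S ^ 2 / #t = c ^ 2 * #S ^ 2 / 8 := by field_simp; ring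
      _ ≤ c ^ 2 * m ^ 2 / 8 := by gcongr
  have hbad : (0 : ℝ) ≤ bad := Nat.cast_nonneg _
  have hsq : c ^ 2 * m ^ 2 / 8 + 32 / c * (bad : ℝ) ≤ #U ^ 2 := by linarith
  refine ⟨U, filter_subset _ _, ?_, ?_⟩
  · have : (c * m / 4) ^ 2 ≤ (#U : ℝ) ^ 2 := by
      have : 0 ≤ 32 / c * (bad : ℝ) := by positivity
      nlinarith
    exact (pow_le_pow_iff_left₀ (by positivity) (by positivity) two_ne_zero).1 this
  · have : 32 / c * (bad : ℝ) ≤ #U ^ 2 := by nlinarith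
    rw [div_mul_eq_mul_div, div_le_iff₀ hc] at this
    linarith

lemma card_div_two_le_card_filter_few_sparse_partners {U : Finset α} (t : Finset β) {c τ : ℝ}
    (hc : 0 < c) (hU : U.Nonempty)
    (hsparse : 32 * #{p ∈ U ×ˢ U | (codegree r t p.1 p.2 : ℝ) < τ} ≤ c * #U ^ 2) :
    (#U : ℝ) / 2 ≤ #{x ∈ U | (#{x' ∈ U | (codegree r t x x' : ℝ) < τ} : ℝ) ≤ c * #U / 16} := by
  have hUpos : (0 : ℝ) < #U := by exact_mod_cast hU.card_pos
  refine card_div_two_le_card_filter_le U (by positivity) (fun _ _ => by positivity) ?_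
  have hsum : ∑ x ∈ U, (#{x' ∈ U | (codegree r t x x' : ℝ) < τ} : ℝ)
      = #{p ∈ U ×ˢ U | (codegree r t p.1 p.2 : ℝ) < τ} := by
    rw [card_filter_product_eq_sum_card_bipartiteAbove (fun x x' => (codegree r t x x' : ℝ) < τ)]
    push_cast
    rfl
  rw [hsum]
  linarith

lemma card_bipartiteBelow_le_card_filter_add_card_filter {A U : Finset α} (hAU : A ⊆ U)
    {t : Finset β} (x : α) (y : β) (τ : ℝ) :
    #(A.bipartiteBelow r y) ≤
      #{z ∈ A | r z y ∧ τ ≤ codegree r t x z} + #{z ∈ U | (codegree r t x z : ℝ) < τ} := by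
  refine (card_le_card fun z hz => ?_).trans (card_union_le _ _)
  rw [mem_bipartiteBelow] at hz
  by_cases hτz : τ ≤ codegree r t x z
  · exact mem_union_left _ (mem_filter.2 ⟨hz.1, hz.2, hτz⟩)
  · exact mem_union_right _ (mem_filter.2 ⟨hAU hz.1, not_le.1 hτz⟩)

theorem exists_large_sets_many_paths_three {s : Finset α} {t : Finset β} (hs : s.Nonempty)
    (ht : t.Nonempty) {c : ℝ} (hc : 0 < c) (hr : c * #s * #t ≤ #{p ∈ s ×ˢ t | r p.1 p.2}) :
    ∃ A ⊆ s, ∃ B ⊆ t, c * #s / 8 ≤ #A ∧ c * #t / 4 ≤ #B ∧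
      ∀ x ∈ A, ∀ y ∈ B,
        c ^ 5 * #s * #t / 2 ^ 14 ≤ #{p ∈ s ×ˢ t | r x p.2 ∧ r p.1 p.2 ∧ r p.1 y} := by
  have hm : (0 : ℝ) < #s := by exact_mod_cast hs.card_pos
  set S := {a ∈ s | c * #t / 2 ≤ (#(t.bipartiteAbove r a) : ℝ)}
  have hS : c * #s * #t / 2 ≤ ∑ a ∈ S, (#(t.bipartiteAbove r a) : ℝ) := by
    have := sum_le_sum_filter_le_add_card_mul s (fun a => (#(t.bipartiteAbove r a) : ℝ))
      (θ := c * #t / 2) (by positivity)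
    rw [card_filter_product_eq_sum_card_bipartiteAbove r] at hr
    push_cast at hr
    linarith
  obtain ⟨U, hUS, hU, hsparse⟩ := exists_large_subset_few_sparse_pairs r ht hc
    (by exact_mod_cast card_le_card (filter_subset _ _)) hS
  set τ := c ^ 3 * #t / 256
  set A := {x ∈ U | (#{x' ∈ U | (codegree r t x x' : ℝ) < τ} : ℝ) ≤ c * #U / 16}
  have hUpos : (0 : ℝ) < #U := lt_of_lt_of_le (by positivity) hU
  have hA : (#U : ℝ) / 2 ≤ #A :=
    card_div_two_le_card_filter_few_sparse_partners r t hc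
      (card_pos.1 (by exact_mod_cast hUpos)) hsparse
  have hAS : A ⊆ S := (filter_subset _ _).trans hUS
  have hApos : (0 : ℝ) < #A := by linarith
  set B := {y ∈ t | c / 2 * #A / 2 ≤ (#(A.bipartiteBelow r y) : ℝ)}
  have hB := le_card_filter_le_card_bipartiteBelow r (t := t)
    (card_pos.1 (by exact_mod_cast hApos)) (by positivity)
    (δ := c / 2) fun x hx => by linarith [(mem_filter.1 (hAS hx)).2]
  refine ⟨A, hAS.trans (filter_subset _ _), B, filter_subset _ _, by linarith, by linarith, ?_⟩
  intro x hx y hy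
  have hgood : c * #A / 8 ≤ #{z ∈ A | r z y ∧ τ ≤ codegree r t x z} := by
    have hsplit : (#(A.bipartiteBelow r y) : ℝ) ≤ #{z ∈ A | r z y ∧ τ ≤ codegree r t x z} +
        #{x' ∈ U | (codegree r t x x' : ℝ) < τ} := by
      exact_mod_cast
        card_bipartiteBelow_le_card_filter_add_card_filter r (filter_subset _ _) x y τ
    linarith [(mem_filter.1 hx).2, (mem_filter.1 hy).2, mul_le_mul_of_nonneg_left hA hc.le]
  calc c ^ 5 * #s * #t / 2 ^ 14 = τ * (c * (c * #s / 8) / 8) := by ring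
    _ ≤ τ * (c * #A / 8) := by gcongr; linarith
    _ ≤ τ * #{z ∈ A | r z y ∧ τ ≤ codegree r t x z} := by gcongr
    _ ≤ #{p ∈ A ×ˢ t | r x p.2 ∧ r p.1 p.2 ∧ r p.1 y} := mul_card_filter_le_card_paths r A t x y τ
    _ ≤ #{p ∈ s ×ˢ t | r x p.2 ∧ r p.1 p.2 ∧ r p.1 y} := by
        gcongr
        exact hAS.trans (filter_subset _ _)

section Additive

variable {G : Type*} [AddCommGroup G] [DecidableEq G]

lemma card_paths_le_card_representations (H : Finset (G × G)) (s t : Finset G) (x y : G) :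
    #{p ∈ s ×ˢ t | (x, p.2) ∈ H ∧ (p.1, p.2) ∈ H ∧ (p.1, y) ∈ H} ≤
      #{q ∈ H.image (fun p => p.1 - p.2) ×ˢ H.image (fun p => p.1 - p.2) ×ˢ
        H.image (fun p => p.1 - p.2) | q.1 - q.2.1 + q.2.2 = x - y} := by
  refine card_le_card_of_injOn (fun p => (x - p.2, p.1 - p.2, p.1 - y)) ?_ ?_
  · intro p hp
    obtain ⟨-, hxw, hzw, hzy⟩ := mem_filter.1 hp
    simp only [coe_filter, Set.mem_ofPred_eq, mem_product]
    exact ⟨⟨mem_image_of_mem _ hxw, mem_image_of_mem _ hzw, mem_image_of_mem _ hzy⟩, by abel⟩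
  · intro p _ p' _ h
    simp only [Prod.mk.injEq, sub_right_inj] at h
    obtain ⟨hw, hz, -⟩ := h
    rw [hw, sub_left_inj] at hz
    exact Prod.ext hz hw

lemma card_sub_mul_le_card_pow_three (A B D : Finset G) {P : ℝ}
    (h : ∀ x ∈ A, ∀ y ∈ B, P ≤ #{q ∈ D ×ˢ D ×ˢ D | q.1 - q.2.1 + q.2.2 = x - y}) :
    #(A - B) * P ≤ #D ^ 3 := by
  calc #(A - B) * P ≤ ∑ d ∈ A - B, (#{q ∈ D ×ˢ D ×ˢ D | q.1 - q.2.1 + q.2.2 = d} : ℝ) := by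
        simpa using card_nsmul_le_sum _ _ P fun d hd => by
          obtain ⟨x, hx, y, hy, rfl⟩ := mem_sub.1 hd
          exact h x hx y hy
    _ = #{q ∈ D ×ˢ D ×ˢ D | q.1 - q.2.1 + q.2.2 ∈ A - B} := by
        exact_mod_cast sum_card_fiberwise_eq_card_filter _ _ _
    _ ≤ #(D ×ˢ D ×ˢ D) := by exact_mod_cast card_filter_le _ _
    _ = #D ^ 3 := by simp only [card_product]; push_cast; ring

lemma card_sub_self_le_of_card_sub_le {A B : Finset G} {L β : ℝ} (hβ : 0 < β) (hB : β ≤ #B)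
    (hAB : #(A - B) ≤ L) : #(A - A) ≤ L ^ 2 / β := by
  have hruzsa : (#(A - A) : ℝ) * #B ≤ #(A - B) ^ 2 := by
    exact_mod_cast sq (#(A - B)) ▸ ruzsa_triangle_inequality_sub_sub_sub A B A
  rw [le_div_iff₀ hβ]
  calc (#(A - A) : ℝ) * β ≤ #(A - A) * #B := by gcongr
    _ ≤ #(A - B) ^ 2 := hruzsa
    _ ≤ L ^ 2 := by gcongr

end Additive

end Finset

/-- The Balog–Szemerédi–Gowers theorem: if `H ⊆ A × A` has `|H| ≥ c·|A|²` and
the restricted difference set `A −_H A` has size at most `c'·|A|`, then some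
subset `A' ⊆ A` with `|A'| ≥ δ·|A|` satisfies `|A' − A'| ≤ K·|A'|`. -/
theorem balog_szemeredi_gowers (c c' : ℝ) (hc : 0 < c) (hc' : 0 < c') :
    ∃ δ K : ℝ, 0 < δ ∧ 0 < K ∧
      ∀ (G : Type) [AddCommGroup G],
        ∀ (A : Finset G), A.Nonempty →
          ∀ (H : Finset (G × G)), ↑H ⊆ (A ×ˢ A : Finset (G × G)) →
            c * (A.card : ℝ) ^ 2 ≤ (H.card : ℝ) →
            ((H.image (fun p => p.1 - p.2)).card : ℝ) ≤ c' * (A.card : ℝ) →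
            ∃ A' : Finset G, A' ⊆ A ∧
              δ * (A.card : ℝ) ≤ (A'.card : ℝ) ∧
              ((A' - A').card : ℝ) ≤ K * (A'.card : ℝ) := by
  refine ⟨c / 8, 2 ^ 33 * c' ^ 6 / c ^ 12, by positivity, by positivity, ?_⟩
  intro G _ A hA H hHA hH hD
  have hn : (0 : ℝ) < #A := by exact_mod_cast hA.card_pos
  obtain ⟨A', hA'A, B, -, hA', hB, hpaths⟩ :=
    exists_large_sets_many_paths_three (fun a b => (a, b) ∈ H) hA hA hc (by
      rwa [filter_mem_eq_inter, inter_eq_right.2 (coe_subset.1 hHA), mul_assoc, ← sq])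
  have hAB : #(A' - B) ≤ 2 ^ 14 * c' ^ 3 * #A / c ^ 5 := by
    have := card_sub_mul_le_card_pow_three A' B (H.image fun p => p.1 - p.2) fun x hx y hy =>
      (hpaths x hx y hy).trans (by exact_mod_cast card_paths_le_card_representations H A A x y)
    rw [le_div_iff₀ (by positivity)]
    refine le_of_mul_le_mul_right ?_ (by positivity : (0 : ℝ) < #A ^ 2 / 2 ^ 14)
    calc _ = #(A' - B) * (c ^ 5 * #A * #A / 2 ^ 14) := by ring
      _ ≤ #(H.image fun p => p.1 - p.2) ^ 3 := this
      _ ≤ (c' * #A) ^ 3 := by gcongr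
      _ = _ := by ring
  refine ⟨A', hA'A, by linarith, ?_⟩
  calc (#(A' - A') : ℝ) ≤ (2 ^ 14 * c' ^ 3 * #A / c ^ 5) ^ 2 / (c * #A / 4) :=
        card_sub_self_le_of_card_sub_le (by positivity) hB hAB
    _ = 2 ^ 30 * c' ^ 6 / c ^ 11 * #A := by field_simp; ring
    _ ≤ 2 ^ 30 * c' ^ 6 / c ^ 11 * (8 / c * #A') := by
        gcongr
        rw [div_mul_eq_mul_div, le_div_iff₀ hc]
        linarith
    _ = 2 ^ 33 * c' ^ 6 / c ^ 12 * #A' := by field_simp; ring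
end
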